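/- arXiv:1309.2116 — 3 statements merged into one kernel-verified Lean document; each statement's English description precedes it below -/
import Mathlib

section
/- Let $(z_j)_{j\ge1}$ be zero-mean square-integrable random variables. Assume there exist a real number $q\ge 1$ and a constant $C$ such that $E\big(\sum_{j=m+1}^{m+n} z_j\big)^2 \le C((m+n)^q - m^q)$ for all $m\ge 0$ and $n\ge 1$. Then for all $\iota > 0$, almost surely $n^{-(q/2+\iota)}\sum_{j=1}^n z_j \to 0$ as $n\to\infty$. -/
/-!
Chaining over dyadic blocks (Gál–Koksma). Writing `n ≤ 2 ^ K` in binary, the partial sum `S n`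
is a sum of at most `K + 1` blocks `(i 2 ^ l, (i + 1) 2 ^ l]`, one for each length `2 ^ l`, so by
Cauchy–Schwarz `S n ² ≤ (K + 1) T K`, where `T K` is the sum of the squares of all dyadic blocks
inside `(0, 2 ^ K]`. On each of the `K + 1` levels the second-moment hypothesis telescopes, so
`E T K ≤ (K + 1) C 2 ^ (q K)`. Hence `∑ₖ E[(K + 1) T K / 2 ^ ((q + 2ι) K)] < ∞`, the summands
tend to `0` almost surely, and for `2 ^ (K - 1) ≤ n < 2 ^ K` this controls `S n / n ^ (q / 2 + ι)`.
-/

open MeasureTheory Filter Finset Topology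

namespace GalKoksma

def dyadicBlock (a : ℕ → ℝ) (l i : ℕ) : ℝ :=
  ∑ j ∈ Ioc (i * 2 ^ l) ((i + 1) * 2 ^ l), a j

def dyadicEnergy (a : ℕ → ℝ) (K : ℕ) : ℝ :=
  ∑ l ∈ range (K + 1), ∑ i ∈ range (2 ^ (K - l)), dyadicBlock a l i ^ 2

lemma dyadicEnergy_nonneg (a : ℕ → ℝ) (K : ℕ) : 0 ≤ dyadicEnergy a K :=
  sum_nonneg fun _ _ => sum_nonneg fun _ _ => sq_nonneg _

/-- Rounding `n` down to a multiple of `2 ^ (l + 1)` instead of `2 ^ l` removes at most one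
dyadic block of length `2 ^ l`. -/
lemma sq_sum_Ioc_round_sub_le (a : ℕ → ℝ) {K n l : ℕ} (hn : n ≤ 2 ^ K) (hl : l ≤ K) :
    (∑ j ∈ Ioc 0 (n / 2 ^ l * 2 ^ l), a j - ∑ j ∈ Ioc 0 (n / 2 ^ (l + 1) * 2 ^ (l + 1)), a j) ^ 2
      ≤ ∑ i ∈ range (2 ^ (K - l)), dyadicBlock a l i ^ 2 := by
  set m := n / 2 ^ l with hm_def
  clear_value m
  have hround : n / 2 ^ (l + 1) * 2 ^ (l + 1) = m / 2 * 2 * 2 ^ l := by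
    rw [pow_succ, ← Nat.div_div_eq_div_mul, ← hm_def]; ring
  have hle : m / 2 * 2 * 2 ^ l ≤ m * 2 ^ l := by gcongr; exact Nat.div_mul_le_self m 2
  rw [hround, ← sum_Ioc_consecutive _ (Nat.zero_le _) hle, add_sub_cancel_left]
  rcases Nat.mod_two_eq_zero_or_one m with heven | hodd
  · rw [show m / 2 * 2 = m by omega, Ioc_self, sum_empty, sq, zero_mul]
    positivity
  · have hm : m * 2 ^ l ≤ 2 ^ (K - l) * 2 ^ l := by
      rw [← pow_add, Nat.sub_add_cancel hl, hm_def]; exact (Nat.div_mul_le_self n _).trans hn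
    have hi : m - 1 < 2 ^ (K - l) := by
      have := Nat.le_of_mul_le_mul_right hm (by positivity); omega
    have hblock : ∑ j ∈ Ioc (m / 2 * 2 * 2 ^ l) (m * 2 ^ l), a j = dyadicBlock a l (m - 1) := by
      rw [dyadicBlock, show m / 2 * 2 = m - 1 by omega, show m - 1 + 1 = m by omega]
    rw [hblock]
    exact single_le_sum (f := fun i => dyadicBlock a l i ^ 2) (fun _ _ => sq_nonneg _)
      (mem_range.mpr hi)

lemma sq_sum_Ioc_le_dyadicEnergy (a : ℕ → ℝ) {K n : ℕ} (hn : n ≤ 2 ^ K) :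
    (∑ j ∈ Ioc 0 n, a j) ^ 2 ≤ (K + 1) * dyadicEnergy a K := by
  set f : ℕ → ℝ := fun l => ∑ j ∈ Ioc 0 (n / 2 ^ l * 2 ^ l), a j
  have htelescope : ∑ j ∈ Ioc 0 n, a j = ∑ l ∈ range (K + 1), (f l - f (l + 1)) := by
    have hlast : n / 2 ^ (K + 1) = 0 :=
      Nat.div_eq_of_lt (hn.trans_lt (Nat.pow_lt_pow_succ one_lt_two))
    rw [sum_range_sub' f]
    simp [f, hlast]
  calc (∑ j ∈ Ioc 0 n, a j) ^ 2 = (∑ l ∈ range (K + 1), (f l - f (l + 1))) ^ 2 := by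
        rw [htelescope]
    _ ≤ (K + 1) * ∑ l ∈ range (K + 1), (f l - f (l + 1)) ^ 2 := by
        simpa using sq_sum_le_card_mul_sum_sq (s := range (K + 1)) (f := fun l => f l - f (l + 1))
    _ ≤ (K + 1) * dyadicEnergy a K := by
        refine mul_le_mul_of_nonneg_left (sum_le_sum fun l hl => ?_) (by positivity)
        exact sq_sum_Ioc_round_sub_le a hn (Nat.lt_succ_iff.mp (mem_range.mp hl))

lemma tendsto_log_two_atTop : Tendsto (Nat.log 2) atTop atTop :=
  tendsto_atTop_atTop.mpr fun K => ⟨2 ^ K, fun _ hn => Nat.le_log_of_pow_le one_lt_two hn⟩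

/-- Every `n ≥ 1` lies in a dyadic range `2 ^ (K - 1) ≤ n < 2 ^ K`, so a bound at the dyadic
scales `2 ^ K` transfers to all `n` at the cost of the factor `2 ^ (2 * b)`. -/
lemma tendsto_div_rpow_of_sq_le_dyadic {a u : ℕ → ℝ} {b : ℝ} (hb : 0 < b)
    (hu : Tendsto u atTop (𝓝 0))
    (hbound : ∀ K n, n ≤ 2 ^ K → a n ^ 2 ≤ u K * ((2 : ℝ) ^ K) ^ (2 * b)) :
    Tendsto (fun n : ℕ => a n / (n : ℝ) ^ b) atTop (𝓝 0) := by
  set K : ℕ → ℕ := fun n => Nat.log 2 n + 1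
  refine squeeze_zero_norm' (a := fun n => √((2 : ℝ) ^ (2 * b) * |u (K n)|)) ?_ ?_
  · filter_upwards [eventually_ne_atTop 0] with n hn
    have hn_pos : (0 : ℝ) < n := by positivity
    have hdyadic : ((2 : ℝ) ^ K n) ≤ 2 * n := by
      have := Nat.pow_log_le_self 2 hn
      simp only [K, pow_succ]; norm_cast; omega
    rw [Real.norm_eq_abs]
    refine Real.abs_le_sqrt ?_
    calc (a n / (n : ℝ) ^ b) ^ 2 = a n ^ 2 / (n : ℝ) ^ (2 * b) := by
          rw [div_pow, ← Real.rpow_mul_natCast hn_pos.le, mul_comm]; norm_num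
      _ ≤ |u (K n)| * ((2 : ℝ) ^ K n) ^ (2 * b) / (n : ℝ) ^ (2 * b) := by
          gcongr
          exact (hbound _ _ (Nat.lt_pow_succ_log_self one_lt_two n).le).trans
            (by gcongr; exact le_abs_self _)
      _ ≤ |u (K n)| * (2 * n) ^ (2 * b) / (n : ℝ) ^ (2 * b) := by gcongr
      _ = (2 : ℝ) ^ (2 * b) * |u (K n)| := by
          rw [Real.mul_rpow (by norm_num) hn_pos.le]
          field_simp
  · have hK : Tendsto K atTop atTop := (tendsto_add_atTop_nat 1).comp tendsto_log_two_atTop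
    simpa using ((hu.abs.const_mul _).comp hK).sqrt

lemma summable_succ_sq_mul_geometric {r : ℝ} (hr : ‖r‖ < 1) :
    Summable fun K : ℕ => ((K : ℝ) + 1) ^ 2 * r ^ K := by
  have h2 := summable_pow_mul_geometric_of_norm_lt_one 2 hr
  have h1 := summable_pow_mul_geometric_of_norm_lt_one 1 hr
  have h0 := summable_pow_mul_geometric_of_norm_lt_one 0 hr
  exact ((h2.add (h1.mul_left 2)).add h0).congr fun K => by ring

section

variable {Ω : Type*} [MeasurableSpace Ω] {μ : Measure Ω}

/-- `∑ₙ fₙ` has finite integral, hence is finite a.e. -/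
lemma ae_tendsto_zero_of_summable_integral {f : ℕ → Ω → ℝ} (hf_nonneg : ∀ n, 0 ≤ᵐ[μ] f n)
    (hf_int : ∀ n, Integrable (f n) μ) (hsum : Summable fun n => ∫ ω, f n ω ∂μ) :
    ∀ᵐ ω ∂μ, Tendsto (fun n => f n ω) atTop (𝓝 0) := by
  have hlintegral : ∫⁻ ω, ∑' n, ENNReal.ofReal (f n ω) ∂μ ≠ ⊤ := by
    rw [lintegral_tsum fun n => (hf_int n).aemeasurable.ennreal_ofReal,
      ← tsum_congr fun n => ofReal_integral_eq_lintegral_ofReal (hf_int n) (hf_nonneg n),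
      ← ENNReal.ofReal_tsum_of_nonneg (fun n => integral_nonneg_of_ae (hf_nonneg n)) hsum]
    exact ENNReal.ofReal_ne_top
  filter_upwards [ae_lt_top' (AEMeasurable.tsum fun n =>
      (hf_int n).aemeasurable.ennreal_ofReal) hlintegral, ae_all_iff.mpr hf_nonneg]
    with ω hfinite hnonneg
  have := (ENNReal.tendsto_toReal ENNReal.zero_ne_top).comp
    (ENNReal.tendsto_atTop_zero_of_tsum_ne_top hfinite.ne)
  simpa [Function.comp_def, ENNReal.toReal_ofReal (hnonneg _)] using this

lemma integrable_dyadicBlock_sq {z : ℕ → Ω → ℝ} (hL2 : ∀ j, MemLp (z j) 2 μ) (l i : ℕ) :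
    Integrable (fun ω => dyadicBlock (fun j => z j ω) l i ^ 2) μ :=
  (memLp_finsetSum _ fun j _ => hL2 j).integrable_sq

lemma integrable_dyadicEnergy {z : ℕ → Ω → ℝ} (hL2 : ∀ j, MemLp (z j) 2 μ) (K : ℕ) :
    Integrable (fun ω => dyadicEnergy (fun j => z j ω) K) μ :=
  integrable_finsetSum _ fun l _ => integrable_finsetSum _ fun i _ =>
    integrable_dyadicBlock_sq hL2 l i

lemma integral_dyadicEnergy_le {z : ℕ → Ω → ℝ} {F : ℕ → ℝ} (hL2 : ∀ j, MemLp (z j) 2 μ)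
    (hincr : ∀ m n, m < n → ∫ ω, (∑ j ∈ Ioc m n, z j ω) ^ 2 ∂μ ≤ F n - F m) (K : ℕ) :
    ∫ ω, dyadicEnergy (fun j => z j ω) K ∂μ ≤ (K + 1) * (F (2 ^ K) - F 0) := by
  have hlevel : ∀ l ∈ range (K + 1),
      ∫ ω, ∑ i ∈ range (2 ^ (K - l)), dyadicBlock (fun j => z j ω) l i ^ 2 ∂μ
        ≤ F (2 ^ K) - F 0 := by
    intro l hl
    have hlK : 2 ^ (K - l) * 2 ^ l = 2 ^ K := by
      rw [← pow_add, Nat.sub_add_cancel (Nat.lt_succ_iff.mp (mem_range.mp hl))]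
    rw [integral_finsetSum _ fun i _ => integrable_dyadicBlock_sq hL2 l i]
    calc ∑ i ∈ range (2 ^ (K - l)), ∫ ω, dyadicBlock (fun j => z j ω) l i ^ 2 ∂μ
        ≤ ∑ i ∈ range (2 ^ (K - l)), (F ((i + 1) * 2 ^ l) - F (i * 2 ^ l)) :=
          sum_le_sum fun i _ => hincr _ _ (by gcongr; omega)
      _ = F (2 ^ K) - F 0 := by
          rw [sum_range_sub (fun i => F (i * 2 ^ l)), hlK, zero_mul]
  unfold dyadicEnergy
  rw [integral_finsetSum _ fun l _ => integrable_finsetSum _ fun i _ =>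
    integrable_dyadicBlock_sq hL2 l i]
  refine (sum_le_sum hlevel).trans_eq ?_
  simp [mul_sub]

lemma ae_tendsto_dyadicEnergy_div_rpow {z : ℕ → Ω → ℝ} {q C p : ℝ} (hq : q ≠ 0) (hqp : q < p)
    (hL2 : ∀ j, MemLp (z j) 2 μ)
    (hincr : ∀ m n, m < n →
      ∫ ω, (∑ j ∈ Ioc m n, z j ω) ^ 2 ∂μ ≤ C * (n : ℝ) ^ q - C * (m : ℝ) ^ q) :
    ∀ᵐ ω ∂μ, Tendsto (fun K : ℕ => (K + 1) * dyadicEnergy (fun j => z j ω) K / ((2 : ℝ) ^ K) ^ p)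
      atTop (𝓝 0) := by
  set u : ℕ → Ω → ℝ := fun K ω => (K + 1) * dyadicEnergy (fun j => z j ω) K / ((2 : ℝ) ^ K) ^ p
  have hu_nonneg : ∀ K ω, 0 ≤ u K ω := fun K ω => by
    have := dyadicEnergy_nonneg (fun j => z j ω) K; positivity
  have hu_int : ∀ K, ∫ ω, u K ω ∂μ ≤ C * (((K : ℝ) + 1) ^ 2 * ((2 : ℝ) ^ (q - p)) ^ K) := by
    intro K
    have hpow : ((2 : ℝ) ^ K) ^ q / ((2 : ℝ) ^ K) ^ p = ((2 : ℝ) ^ (q - p)) ^ K := by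
      rw [← Real.rpow_sub (by positivity), Real.rpow_pow_comm zero_le_two]
    simp only [u]
    rw [integral_div, integral_const_mul, ← hpow]
    calc (K + 1) * (∫ ω, dyadicEnergy (fun j => z j ω) K ∂μ) / ((2 : ℝ) ^ K) ^ p
        ≤ (K + 1) * ((K + 1) * (C * ((2 ^ K : ℕ) : ℝ) ^ q - C * ((0 : ℕ) : ℝ) ^ q))
            / ((2 : ℝ) ^ K) ^ p := by
          gcongr
          exact integral_dyadicEnergy_le hL2 hincr K
      _ = _ := by push_cast; rw [Real.zero_rpow hq]; ring
  have hratio : ‖(2 : ℝ) ^ (q - p)‖ < 1 := by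
    rw [Real.norm_of_nonneg (by positivity)]
    exact Real.rpow_lt_one_of_one_lt_of_neg one_lt_two (by linarith)
  exact ae_tendsto_zero_of_summable_integral (fun K => ae_of_all _ (hu_nonneg K))
    (fun K => ((integrable_dyadicEnergy hL2 K).const_mul _).div_const _)
    (Summable.of_nonneg_of_le (fun K => integral_nonneg (hu_nonneg K)) hu_int
      ((summable_succ_sq_mul_geometric hratio).mul_left C))

end

end GalKoksma

open GalKoksma in
theorem stmt_2_general {Ω : Type*} [MeasurableSpace Ω] (μ : Measure Ω)
    (z : ℕ → Ω → ℝ) (q C : ℝ) (hq : 1 ≤ q)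
    (hL2 : ∀ j, MemLp (z j) 2 μ)
    (hvar : ∀ m n : ℕ, 1 ≤ n →
        ∫ ω, (∑ j ∈ Finset.Icc (m + 1) (m + n), z j ω) ^ 2 ∂μ ≤
          C * (((m + n : ℕ) : ℝ) ^ q - (m : ℝ) ^ q)) :
    ∀ ι : ℝ, 0 < ι →
      ∀ᵐ ω ∂μ, Tendsto
        (fun n : ℕ => (∑ j ∈ Finset.Icc 1 n, z j ω) / (n : ℝ) ^ (q / 2 + ι))
        atTop (nhds 0) := by
  intro ι hι
  have hincr : ∀ m n, m < n →
      ∫ ω, (∑ j ∈ Ioc m n, z j ω) ^ 2 ∂μ ≤ C * (n : ℝ) ^ q - C * (m : ℝ) ^ q := by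
    intro m n hmn
    obtain ⟨k, rfl⟩ := Nat.exists_eq_add_of_le hmn.le
    simpa [Icc_add_one_left_eq_Ioc, mul_sub] using hvar m k (by omega)
  filter_upwards [ae_tendsto_dyadicEnergy_div_rpow (p := 2 * (q / 2 + ι)) (by positivity)
    (by linarith) hL2 hincr] with ω hω
  simp_rw [show ∀ n, Icc 1 n = Ioc 0 n from Icc_add_one_left_eq_Ioc 0]
  refine tendsto_div_rpow_of_sq_le_dyadic (by positivity) hω fun K n hn => ?_
  calc (∑ j ∈ Ioc 0 n, z j ω) ^ 2 ≤ (K + 1) * dyadicEnergy (fun j => z j ω) K :=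
        sq_sum_Ioc_le_dyadicEnergy _ hn
    _ = _ := by field_simp

/-- Gal–Koksma strong law of large numbers: if `z j` are zero-mean square-integrable
random variables with `E(∑_{j=m+1}^{m+n} z j)² ≤ C((m+n)^q - m^q)` for some `q ≥ 1`,
then for every `ι > 0`, `n^{-(q/2+ι)} ∑_{j=1}^n z j → 0` almost surely. -/
theorem stmt_2 {Ω : Type*} [MeasurableSpace Ω] (μ : Measure Ω) [IsProbabilityMeasure μ]
    (z : ℕ → Ω → ℝ) (q C : ℝ) (hq : 1 ≤ q)
    (hmeas : ∀ j, Measurable (z j))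
    (hL2 : ∀ j, MemLp (z j) 2 μ)
    (hmean : ∀ j, ∫ ω, z j ω ∂μ = 0)
    (hvar : ∀ m n : ℕ, 1 ≤ n →
        ∫ ω, (∑ j ∈ Finset.Icc (m + 1) (m + n), z j ω) ^ 2 ∂μ ≤
          C * (((m + n : ℕ) : ℝ) ^ q - (m : ℝ) ^ q)) :
    ∀ ι : ℝ, 0 < ι →
      ∀ᵐ ω ∂μ, Tendsto
        (fun n : ℕ => (∑ j ∈ Finset.Icc 1 n, z j ω) / (n : ℝ) ^ (q / 2 + ι))
        atTop (nhds 0) :=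
  stmt_2_general μ z q C hq hL2 hvar
end

section
/- Let $T:[0,1]\to[0,1]$ be a map, $x_0:[0,1]\to[0,1]$ (the parameter-dependent point written as $x_0(a)$), and suppose for the recursion $x_{j+1}(a)=T_a(x_j(a))$ the chain rule identity holds at a parameter $a$ where all maps are differentiable: $x_j'(a) = (T_a^{j-k})'(x_k(a))\,x_k'(a) + \sum_{i=k+1}^{j} (T_a^{j-i})'(x_i(a))\,(\partial_a T_a)(x_{i-1}(a))$ for $0\le k< j$. If additionally $|T_a'(x)|\ge \lambda > 1$ everywhere along the orbit, $|(\partial_a T_a)(x)| \le D$ for all relevant $x$, and $|x_k'(a)| \ge D/(\lambda-1) + 2L$ for some $L \ge 0$, then for all $j > k$: $|x_j'(a)| \ge 2L\,|(T_a^{j-k})'(x_k(a))| \ge 2L\lambda^{j-k}$. -/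
/-!
Unrolling the chain rule identity one step gives `x_{j+1}' = T'(x_j) x_j' + (∂_a T)(x_j)`, hence
`|x_{j+1}'| ≥ |T'(x_j)| |x_j'| - D`. The threshold `D/(λ-1)` is the fixed point of `y ↦ λ y - D`,
so by induction the excess of `|x_j'|` over it is at least `2L |(T^{j-k})'(x_k)|`, and that
derivative is at least `λ^{j-k}`.
-/

open Finset

theorem chain_rule_rhs_succ (d p : ℕ → ℝ) (c : ℝ) {k j : ℕ} (hkj : k ≤ j) :
    (∏ l ∈ Ico k (j + 1), d l) * c +
        ∑ i ∈ Icc (k + 1) (j + 1), (∏ l ∈ Ico i (j + 1), d l) * p (i - 1) =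
      d j * ((∏ l ∈ Ico k j, d l) * c +
        ∑ i ∈ Icc (k + 1) j, (∏ l ∈ Ico i j, d l) * p (i - 1)) + p j := by
  have hsum : ∑ i ∈ Icc (k + 1) j, (∏ l ∈ Ico i (j + 1), d l) * p (i - 1) =
      d j * ∑ i ∈ Icc (k + 1) j, (∏ l ∈ Ico i j, d l) * p (i - 1) := by
    rw [mul_sum]
    refine sum_congr rfl fun i hi => ?_
    rw [prod_Ico_succ_top (mem_Icc.mp hi).2]
    ring
  rw [sum_Icc_succ_top (by omega), hsum, prod_Ico_succ_top hkj, Ico_self, prod_empty,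
    Nat.add_sub_cancel]
  ring

theorem succ_eq_mul_add_of_chain_rule {d x p : ℕ → ℝ} {k : ℕ}
    (hchain : ∀ j, k < j →
      x j = (∏ l ∈ Ico k j, d l) * x k +
        ∑ i ∈ Icc (k + 1) j, (∏ l ∈ Ico i j, d l) * p (i - 1))
    {j : ℕ} (hkj : k ≤ j) : x (j + 1) = d j * x j + p j := by
  have hj : x j = (∏ l ∈ Ico k j, d l) * x k +
      ∑ i ∈ Icc (k + 1) j, (∏ l ∈ Ico i j, d l) * p (i - 1) := by
    rcases hkj.eq_or_lt with rfl | hlt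
    · simp
    · exact hchain j hlt
  rw [hchain (j + 1) (by omega), chain_rule_rhs_succ d p _ hkj, ← hj]

theorem abs_mul_sub_le_abs_mul_add {a y q D : ℝ} (hq : |q| ≤ D) : |a| * |y| - D ≤ |a * y + q| := by
  have := abs_sub_abs_le_abs_add (a * y) q
  rw [abs_mul] at this
  linarith

theorem le_abs_of_expanding_recurrence {d x p : ℕ → ℝ} {lam D M : ℝ} {k : ℕ} (hlam : 1 < lam)
    (hrec : ∀ j, k ≤ j → x (j + 1) = d j * x j + p j) (hexp : ∀ l, lam ≤ |d l|)
    (hp : ∀ i, |p i| ≤ D) (hk : D / (lam - 1) + M ≤ |x k|) :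
    ∀ j, k ≤ j → D / (lam - 1) + M * |∏ l ∈ Ico k j, d l| ≤ |x j| := by
  have hlam1 : 0 < lam - 1 := sub_pos.mpr hlam
  have hthreshold : 0 ≤ D / (lam - 1) := div_nonneg ((abs_nonneg _).trans (hp k)) hlam1.le
  intro j hkj
  induction j, hkj using Nat.le_induction with
  | base => simpa using hk
  | succ j hkj ih =>
    have hd : 0 ≤ |d j| := abs_nonneg _
    have hfixed : D / (lam - 1) + D ≤ |d j| * (D / (lam - 1)) := by
      have : D / (lam - 1) + D = lam * (D / (lam - 1)) := by field_simp; ring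
      rw [this]
      exact mul_le_mul_of_nonneg_right (hexp j) hthreshold
    calc D / (lam - 1) + M * |∏ l ∈ Ico k (j + 1), d l|
        = D / (lam - 1) + |d j| * (M * |∏ l ∈ Ico k j, d l|) := by
          rw [prod_Ico_succ_top hkj, abs_mul]; ring
      _ ≤ |d j| * (D / (lam - 1) + M * |∏ l ∈ Ico k j, d l|) - D := by linarith
      _ ≤ |d j| * |x j| - D := by gcongr
      _ ≤ |x (j + 1)| := by rw [hrec j hkj]; exact abs_mul_sub_le_abs_mul_add (hp j)

theorem pow_card_Ico_le_abs_prod {d : ℕ → ℝ} {lam : ℝ} (hlam : 0 ≤ lam) (hexp : ∀ l, lam ≤ |d l|)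
    (k j : ℕ) : lam ^ (j - k) ≤ |∏ l ∈ Ico k j, d l| :=
  calc lam ^ (j - k) = ∏ _l ∈ Ico k j, lam := by rw [prod_const, Nat.card_Ico]
    _ ≤ ∏ l ∈ Ico k j, |d l| := prod_le_prod (fun _ _ => hlam) fun l _ => hexp l
    _ = |∏ l ∈ Ico k j, d l| := (abs_prod _ _).symm

theorem stmt_3_general (d Dx Pa : ℕ → ℝ) (lam D L : ℝ) (k : ℕ)
    (hlam : 1 < lam) (hL : 0 ≤ L)
    (hchain : ∀ j, k < j →
      Dx j = (∏ l ∈ Finset.Ico k j, d l) * Dx k +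
        ∑ i ∈ Finset.Icc (k + 1) j, (∏ l ∈ Finset.Ico i j, d l) * Pa (i - 1))
    (hexp : ∀ l, lam ≤ |d l|)
    (hPa : ∀ i, |Pa i| ≤ D)
    (hDxk : D / (lam - 1) + 2 * L ≤ |Dx k|) :
    ∀ j, k < j →
      2 * L * lam ^ (j - k) ≤ 2 * L * |∏ l ∈ Finset.Ico k j, d l| ∧
      2 * L * |∏ l ∈ Finset.Ico k j, d l| ≤ |Dx j| := by
  intro j hkj
  have hthreshold : 0 ≤ D / (lam - 1) :=
    div_nonneg ((abs_nonneg _).trans (hPa k)) (sub_pos.mpr hlam).le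
  have hbound := le_abs_of_expanding_recurrence hlam
    (fun j hkj => succ_eq_mul_add_of_chain_rule hchain hkj) hexp hPa hDxk j hkj.le
  exact ⟨mul_le_mul_of_nonneg_left (pow_card_Ico_le_abs_prod (by linarith) hexp k j) (by linarith),
    by linarith⟩

/-- Lower bound on the parameter derivative along the orbit. Here `d l` stands for the
one-step spatial derivative `T_a'(x_l(a))`, so that `(T_a^{j-i})'(x_i(a)) = ∏_{l=i}^{j-1} d l`;
`Dx j` stands for `x_j'(a)` and `Pa i` for `(∂_a T_a)(x_i(a))`. Assuming the chain rule
identity, the expansion `|d l| ≥ λ > 1`, the bound `|Pa i| ≤ D`, and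
`|Dx k| ≥ D/(λ-1) + 2L`, one gets `|Dx j| ≥ 2L |(T_a^{j-k})'(x_k(a))| ≥ 2L λ^{j-k}` for `j > k`. -/
theorem stmt_3 (d Dx Pa : ℕ → ℝ) (lam D L : ℝ) (k : ℕ)
    (hlam : 1 < lam) (hD : 0 ≤ D) (hL : 0 ≤ L)
    (hchain : ∀ j, k < j →
      Dx j = (∏ l ∈ Finset.Ico k j, d l) * Dx k +
        ∑ i ∈ Finset.Icc (k + 1) j, (∏ l ∈ Finset.Ico i j, d l) * Pa (i - 1))
    (hexp : ∀ l, lam ≤ |d l|)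
    (hPa : ∀ i, |Pa i| ≤ D)
    (hDxk : D / (lam - 1) + 2 * L ≤ |Dx k|) :
    ∀ j, k < j →
      2 * L * lam ^ (j - k) ≤ 2 * L * |∏ l ∈ Finset.Ico k j, d l| ∧
      2 * L * |∏ l ∈ Finset.Ico k j, d l| ≤ |Dx j| :=
  stmt_3_general d Dx Pa lam D L k hlam hL hchain hexp hPa hDxk
end

section
/- Let $(d_j)_{j\ge1}$ be a sequence of positive reals with $\limsup_{j\to\infty} d_j e^{j^\delta} < \infty$ for some $\delta>0$, and let $(\mathcal{P}_j)$ be partitions of $[0,\epsilon]$ into intervals on which maps $x_j$ are monotone with distortion bound $|\omega| \le C |x_j(\omega)|/\|x_j'|_\omega\|_\infty$ for each $\omega\in\mathcal{P}_j$. If for every $\delta_0>0$ there is $C_{\delta_0}$ with $\sum_{\omega\in\mathcal{P}_j} \|x_j'|_\omega\|_\infty^{-1} \le C_{\delta_0} e^{j^{\delta_0}}$ for all $j$, then there is a constant $C'$ such that for all $j \ge 1$, the total Lebesgue measure of the union of those $\omega \in \mathcal{P}_j$ with $|x_j(\omega)| \le d_j$ is at most $C' d_j^{1/2}$. -/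
/-!
On each partition element with image of length at most `t`, the distortion bound gives
`|ω| ≤ C t / ‖x_j'|_ω‖_∞`, so the union of these elements has measure at most
`C t ∑_ω ‖x_j'|_ω‖_∞⁻¹ ≤ C C₀ t e^{j^{δ/2}}` by condition (III) with `δ₀ = δ/2`. Since
`j^δ ≥ 2 j^{δ/2}` for large `j`, the decay of `d_j` makes `d_j^{1/2} e^{j^{δ/2}}` bounded,
which turns the bound at `t = d_j` into `C' d_j^{1/2}`.
-/

open MeasureTheory Filter Real Finset

lemma measureReal_sUnion_small_image_le {α : Type*} [MeasurableSpace α] (μ : Measure α)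
    (P : Finset (Set α)) (ximg Dsup : Set α → ℝ) {C t : ℝ} (hC : 0 ≤ C) (ht : 0 ≤ t)
    (hD : ∀ ω ∈ P, 0 < Dsup ω) (hdist : ∀ ω ∈ P, μ.real ω ≤ C * ximg ω / Dsup ω) :
    μ.real (⋃₀ {ω | ω ∈ P ∧ ximg ω ≤ t}) ≤ C * t * ∑ ω ∈ P, (Dsup ω)⁻¹ := by
  set S := P.filter (ximg · ≤ t)
  have hS : {ω | ω ∈ P ∧ ximg ω ≤ t} = ↑S := by ext; simp [S]
  rw [hS, Set.sUnion_eq_biUnion, mul_sum]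
  calc μ.real (⋃ ω ∈ S, ω) ≤ ∑ ω ∈ S, μ.real ω := measureReal_biUnion_finset_le S id
    _ ≤ ∑ ω ∈ S, C * t * (Dsup ω)⁻¹ := sum_le_sum fun ω hω => by
      obtain ⟨hωP, hωt⟩ := mem_filter.mp hω
      have := hD ω hωP
      calc μ.real ω ≤ C * ximg ω / Dsup ω := hdist ω hωP
        _ ≤ C * t / Dsup ω := by gcongr
        _ = C * t * (Dsup ω)⁻¹ := div_eq_mul_inv _ _
    _ ≤ ∑ ω ∈ P, C * t * (Dsup ω)⁻¹ :=
      sum_le_sum_of_subset_of_nonneg (filter_subset _ _) fun ω hω _ => by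
        have := hD ω hω
        positivity

lemma eventually_sqrt_mul_exp_rpow_half_le {δ K : ℝ} (hδ : 0 < δ) {d : ℕ → ℝ}
    (hd : ∀ j, 0 ≤ d j) (h : ∀ᶠ j : ℕ in atTop, d j * exp ((j : ℝ) ^ δ) ≤ K) :
    ∀ᶠ j : ℕ in atTop, √(d j) * exp ((j : ℝ) ^ (δ / 2)) ≤ √K := by
  have hlarge : ∀ᶠ j : ℕ in atTop, 2 ≤ (j : ℝ) ^ (δ / 2) :=
    ((tendsto_rpow_atTop (half_pos hδ)).comp tendsto_natCast_atTop_atTop).eventually_ge_atTop 2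
  filter_upwards [h, hlarge] with j hj h2
  set a := (j : ℝ) ^ (δ / 2)
  have ha : a ^ 2 = (j : ℝ) ^ δ := by
    rw [← rpow_natCast, ← rpow_mul (Nat.cast_nonneg j)]
    norm_num
  refine le_sqrt_of_sq_le ?_
  calc (√(d j) * exp a) ^ 2 = d j * exp (2 * a) := by
        rw [mul_pow, sq_sqrt (hd j), ← exp_nat_mul]
        norm_num
    _ ≤ d j * exp (a ^ 2) := by
        have := hd j
        gcongr
        nlinarith
    _ ≤ K := ha ▸ hj

theorem stmt_9_general (C δ : ℝ) (hC : 0 < C) (hδ : 0 < δ)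
    (d : ℕ → ℝ) (hd : ∀ j, 0 < d j)
    (hlim : ∃ K : ℝ, ∀ᶠ j : ℕ in atTop, d j * Real.exp ((j : ℝ) ^ δ) ≤ K)
    (P : ℕ → Finset (Set ℝ)) (ximg Dsup : ℕ → Set ℝ → ℝ)
    (hDsup_pos : ∀ j, ∀ ω ∈ P j, 0 < Dsup j ω)
    (hdist : ∀ j, ∀ ω ∈ P j, (volume ω).toReal ≤ C * ximg j ω / Dsup j ω)
    (hcond : ∀ δ0 : ℝ, 0 < δ0 → ∃ C0 : ℝ, ∀ j : ℕ, 1 ≤ j →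
        ∑ ω ∈ P j, (Dsup j ω)⁻¹ ≤ C0 * Real.exp ((j : ℝ) ^ δ0)) :
    ∃ C' : ℝ, ∀ j : ℕ, 1 ≤ j →
      (volume (⋃₀ {ω : Set ℝ | ω ∈ P j ∧ ximg j ω ≤ d j})).toReal ≤
        C' * (d j) ^ ((1 : ℝ) / 2) := by
  obtain ⟨K, hK⟩ := hlim
  obtain ⟨B, hB⟩ := (isBoundedUnder_of_eventually_le
    (eventually_sqrt_mul_exp_rpow_half_le hδ (fun j => (hd j).le) hK)).bddAbove_range
  obtain ⟨C0, hC0⟩ := hcond (δ / 2) (half_pos hδ)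
  have hC0_nonneg : 0 ≤ C0 := nonneg_of_mul_nonneg_left
    ((sum_nonneg fun ω hω => (inv_pos.2 (hDsup_pos 1 ω hω)).le).trans (hC0 1 le_rfl)) (exp_pos _)
  refine ⟨C * C0 * B, fun j hj => ?_⟩
  have hdj := hd j
  rw [← sqrt_eq_rpow]
  calc _ ≤ C * d j * ∑ ω ∈ P j, (Dsup j ω)⁻¹ :=
        measureReal_sUnion_small_image_le volume (P j) (ximg j) (Dsup j) hC.le hdj.le
          (hDsup_pos j) (hdist j)
    _ ≤ C * d j * (C0 * exp ((j : ℝ) ^ (δ / 2))) := by gcongr; exact hC0 j hj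
    _ = C * C0 * √(d j) * (√(d j) * exp ((j : ℝ) ^ (δ / 2))) := by
        linear_combination (-C * C0 * exp ((j : ℝ) ^ (δ / 2))) * mul_self_sqrt hdj.le
    _ ≤ C * C0 * √(d j) * B := by gcongr; exact hB ⟨j, rfl⟩
    _ = C * C0 * B * √(d j) := by ring

/-- Control of the total size of partition elements with too small image (Lemma 4.1).
`P j` is the finite partition of `[0,ε]` into intervals of monotonicity of `x_j`,
`ximg j ω = |x_j(ω)|` the length of the image, `Dsup j ω = ‖x_j'|_ω‖_∞`. Under the
distortion bound `|ω| ≤ C |x_j(ω)| / ‖x_j'|_ω‖_∞`, condition (III), and stretched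
exponential decay of `d j`, the union of those `ω ∈ P j` with `|x_j(ω)| ≤ d j` has
measure at most `C' d_j^{1/2}`. -/
theorem stmt_9 (ε C δ : ℝ) (hε : 0 < ε) (hC : 0 < C) (hδ : 0 < δ)
    (d : ℕ → ℝ) (hd : ∀ j, 0 < d j)
    (hlim : ∃ K : ℝ, ∀ᶠ j : ℕ in atTop, d j * Real.exp ((j : ℝ) ^ δ) ≤ K)
    (P : ℕ → Finset (Set ℝ)) (ximg Dsup : ℕ → Set ℝ → ℝ)
    (hximg_nonneg : ∀ j, ∀ ω ∈ P j, 0 ≤ ximg j ω)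
    (hDsup_pos : ∀ j, ∀ ω ∈ P j, 0 < Dsup j ω)
    (hpart : ∀ j, ∀ ω ∈ P j, ω ⊆ Set.Icc 0 ε ∧ MeasurableSet ω)
    (hdist : ∀ j, ∀ ω ∈ P j, (volume ω).toReal ≤ C * ximg j ω / Dsup j ω)
    (hcond : ∀ δ0 : ℝ, 0 < δ0 → ∃ C0 : ℝ, ∀ j : ℕ, 1 ≤ j →
        ∑ ω ∈ P j, (Dsup j ω)⁻¹ ≤ C0 * Real.exp ((j : ℝ) ^ δ0)) :
    ∃ C' : ℝ, ∀ j : ℕ, 1 ≤ j →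
      (volume (⋃₀ {ω : Set ℝ | ω ∈ P j ∧ ximg j ω ≤ d j})).toReal ≤
        C' * (d j) ^ ((1 : ℝ) / 2) :=
  stmt_9_general C δ hC hδ d hd hlim P ximg Dsup hDsup_pos hdist hcond
end
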